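/- Let Z be an m×n real matrix with singular value decomposition Z = U diag(σ) V'. For λ ≥ 0, the matrix S_{λ,ℓ₁}(Z) := U diag((σ_1 − λ)_+, …, (σ_{min(m,n)} − λ)_+) V' (soft-thresholding of the singular values) is a minimizer over all m×n matrices X of (1/2)‖X − Z‖_F² + λ‖X‖_*, where ‖X‖_* = Σ_i σ_i(X) is the nuclear norm and (a)_+ = max{a, 0}. -/

import Mathlib

/-!
Put `dᵢ = (σᵢ − λ)₊` and `cᵢ = min(σᵢ, λ) ∈ [0, λ]`, so that `S = U diag(d) Vᵀ` and
`G = Z − S = U diag(c) Vᵀ`. The matrix `G` is a subgradient of `λ‖·‖_*` at `S`: on the one hand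
`⟨G, S⟩ = ∑ cᵢ dᵢ = λ ∑ dᵢ = λ‖S‖_*`; on the other hand `G` has operator norm at most `λ`, so
`⟨G, X⟩ ≤ λ‖X‖_*` for every `X` (compute the trace in an orthonormal eigenbasis of `XᵀX`, whose
vectors `X` maps to vectors of length `√μᵢ`, and apply Cauchy–Schwarz). Expanding
`‖X − Z‖² = ‖X − S‖² + 2⟨X − S, S − Z⟩ + ‖S − Z‖²` then gives the claim.
-/
open Matrix

/-- Squared Frobenius norm of a real matrix. -/
noncomputable def frobSq {m n : ℕ} (A : Matrix (Fin m) (Fin n) ℝ) : ℝ :=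
  ∑ i, ∑ j, (A i j) ^ 2

/-- The nuclear norm `‖X‖_* = ∑_{i=1}^{min(m,n)} σ_i(X)`: the singular values of `X` are the
square roots of the eigenvalues of the smaller of the two Gram matrices `XᵀX`, `XXᵀ`. -/
noncomputable def nuclearNorm {m n : ℕ} (X : Matrix (Fin m) (Fin n) ℝ) : ℝ :=
  if n ≤ m then
    ∑ i : Fin n, Real.sqrt ((Matrix.isHermitian_conjTranspose_mul_self X).eigenvalues i)
  else
    ∑ i : Fin m, Real.sqrt ((Matrix.isHermitian_mul_conjTranspose_self X).eigenvalues i)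

open Polynomial

section Spectral

variable {ι κ : Type*} [Fintype ι] [Fintype κ]

theorem Matrix.card_le_card_of_transpose_mul_self_eq_one {K : Type*} [Field K] [DecidableEq κ]
    {U : Matrix ι κ K} (hU : Uᵀ * U = 1) : Fintype.card κ ≤ Fintype.card ι :=
  calc Fintype.card κ = (Uᵀ * U).rank := by rw [hU, rank_one]
    _ ≤ U.rank := rank_mul_le_right _ _
    _ ≤ Fintype.card ι := rank_le_card_height U

theorem Matrix.mulVec_dotProduct_mulVec (A B : Matrix ι κ ℝ) (v w : κ → ℝ) :
    A *ᵥ v ⬝ᵥ B *ᵥ w = v ⬝ᵥ (Aᵀ * B) *ᵥ w := by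
  rw [← mulVec_mulVec, dotProduct_mulVec v Aᵀ, vecMul_transpose]

theorem Matrix.mulVec_dotProduct_mulVec_self_of_transpose_mul_self_eq_one [DecidableEq κ]
    {U : Matrix ι κ ℝ} (hU : Uᵀ * U = 1) (v : κ → ℝ) : U *ᵥ v ⬝ᵥ U *ᵥ v = v ⬝ᵥ v := by
  rw [mulVec_dotProduct_mulVec, hU, one_mulVec]

theorem Matrix.dotProduct_le_sqrt_mul_sqrt (u v : κ → ℝ) : u ⬝ᵥ v ≤ √(u ⬝ᵥ u) * √(v ⬝ᵥ v) := by
  simpa [dotProduct, ← sq] using Real.sum_mul_le_sqrt_mul_sqrt Finset.univ u v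

theorem OrthonormalBasis.dotProduct_self (b : OrthonormalBasis κ ℝ (EuclideanSpace ℝ κ)) (i : κ) :
    b i ⬝ᵥ b i = 1 := by
  have h := real_inner_self_eq_norm_sq (b i)
  rw [b.orthonormal.1 i, EuclideanSpace.inner_eq_star_dotProduct] at h
  simpa using h

variable [DecidableEq κ]

theorem Matrix.trace_eq_sum_dotProduct_mulVec (M : Matrix κ κ ℝ)
    (b : OrthonormalBasis κ ℝ (EuclideanSpace ℝ κ)) :
    M.trace = ∑ i, b i ⬝ᵥ M *ᵥ b i := by
  rw [← trace_toLin'_eq, ← LinearMap.trace_conj' _ (WithLp.linearEquiv 2 ℝ (κ → ℝ)).symm,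
    LinearMap.trace_eq_sum_inner _ b]
  refine Fintype.sum_congr _ _ fun i => ?_
  simp [EuclideanSpace.inner_eq_star_dotProduct, dotProduct_comm]

theorem Matrix.roots_charpoly_diagonal {R : Type*} [CommRing R] [IsDomain R] (c : κ → R) :
    (diagonal c).charpoly.roots = Finset.univ.val.map c := by
  rw [charpoly_diagonal, roots_prod _ _ (Finset.prod_ne_zero_iff.mpr fun i _ => X_sub_C_ne_zero _)]
  simp

theorem Matrix.charpoly_mul_mul_transpose {R : Type*} [CommRing R] {V : Matrix κ κ R}
    (hV : Vᵀ * V = 1) (D : Matrix κ κ R) : (V * D * Vᵀ).charpoly = D.charpoly := by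
  rw [charpoly_mul_comm, ← Matrix.mul_assoc, hV, Matrix.one_mul]

theorem Matrix.IsHermitian.sum_comp_eigenvalues_of_charpoly_eq {A : Matrix κ κ ℝ}
    (hA : A.IsHermitian) {c : κ → ℝ} (h : A.charpoly = (diagonal c).charpoly) (f : ℝ → ℝ) :
    ∑ i, f (hA.eigenvalues i) = ∑ i, f (c i) := by
  have hroots : Finset.univ.val.map hA.eigenvalues = Finset.univ.val.map c := by
    simpa [hA.roots_charpoly_eq_eigenvalues, roots_charpoly_diagonal] using congrArg roots h
  calc ∑ i, f (hA.eigenvalues i) = ((Finset.univ.val.map hA.eigenvalues).map f).sum := by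
        rw [Multiset.map_map]; rfl
    _ = ∑ i, f (c i) := by rw [hroots, Multiset.map_map]; rfl

theorem Matrix.IsHermitian.mulVec_eigenvectorBasis_dotProduct_self {X : Matrix ι κ ℝ}
    (hX : (Xᴴ * X).IsHermitian) (i : κ) :
    X *ᵥ hX.eigenvectorBasis i ⬝ᵥ X *ᵥ hX.eigenvectorBasis i = hX.eigenvalues i := by
  rw [mulVec_dotProduct_mulVec, ← conjTranspose_eq_transpose_of_trivial,
    hX.mulVec_eigenvectorBasis, dotProduct_smul, OrthonormalBasis.dotProduct_self, smul_eq_mul,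
    mul_one]

theorem Matrix.trace_transpose_mul_le {G X : Matrix ι κ ℝ} (hX : (Xᴴ * X).IsHermitian)
    {lam : ℝ} (hlam : 0 ≤ lam) (hG : ∀ v, G *ᵥ v ⬝ᵥ G *ᵥ v ≤ lam ^ 2 * (v ⬝ᵥ v)) :
    (Gᵀ * X).trace ≤ lam * ∑ i, √(hX.eigenvalues i) := by
  set b := hX.eigenvectorBasis
  rw [trace_eq_sum_dotProduct_mulVec _ b, Finset.mul_sum]
  refine Finset.sum_le_sum fun i _ => ?_
  have hGb : √(G *ᵥ b i ⬝ᵥ G *ᵥ b i) ≤ lam := by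
    refine Real.sqrt_le_iff.mpr ⟨hlam, ?_⟩
    simpa [b.dotProduct_self] using hG (b i)
  calc b i ⬝ᵥ (Gᵀ * X) *ᵥ b i = G *ᵥ b i ⬝ᵥ X *ᵥ b i := (mulVec_dotProduct_mulVec ..).symm
    _ ≤ √(G *ᵥ b i ⬝ᵥ G *ᵥ b i) * √(X *ᵥ b i ⬝ᵥ X *ᵥ b i) := dotProduct_le_sqrt_mul_sqrt ..
    _ ≤ lam * √(hX.eigenvalues i) := by
      rw [hX.mulVec_eigenvectorBasis_dotProduct_self]
      exact mul_le_mul_of_nonneg_right hGb (Real.sqrt_nonneg _)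

end Spectral

section SingularValueDecomposition

variable {ι κ : Type*} [Fintype ι] [Fintype κ] [DecidableEq κ]
  {U : Matrix ι κ ℝ} {V : Matrix κ κ ℝ}

theorem Matrix.transpose_mul_of_diagonal_sandwich (hU : Uᵀ * U = 1) (d e : κ → ℝ) :
    (U * diagonal d * Vᵀ)ᵀ * (U * diagonal e * Vᵀ) = V * diagonal (d * e) * Vᵀ := by
  simp only [transpose_mul, transpose_transpose, diagonal_transpose, Matrix.mul_assoc]
  rw [← Matrix.mul_assoc Uᵀ, hU, Matrix.one_mul, ← Matrix.mul_assoc (diagonal d),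
    diagonal_mul_diagonal]
  rfl

theorem Matrix.trace_transpose_mul_of_diagonal_sandwich (hU : Uᵀ * U = 1) (hV : Vᵀ * V = 1)
    (d e : κ → ℝ) :
    ((U * diagonal d * Vᵀ)ᵀ * (U * diagonal e * Vᵀ)).trace = ∑ i, d i * e i := by
  rw [transpose_mul_of_diagonal_sandwich hU, trace_mul_comm, ← Matrix.mul_assoc, hV,
    Matrix.one_mul, trace_diagonal]
  rfl

theorem Matrix.mulVec_dotProduct_mulVec_self_le_of_diagonal_sandwich (hU : Uᵀ * U = 1)
    (hV : Vᵀ * V = 1) {c : κ → ℝ} {lam : ℝ} (hc : ∀ i, |c i| ≤ lam) (v : κ → ℝ) :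
    (U * diagonal c * Vᵀ) *ᵥ v ⬝ᵥ (U * diagonal c * Vᵀ) *ᵥ v ≤ lam ^ 2 * (v ⬝ᵥ v) := by
  have hVt : Vᵀᵀ * Vᵀ = 1 := by rw [transpose_transpose]; exact mul_eq_one_comm.mp hV
  set w := Vᵀ *ᵥ v
  rw [← mulVec_mulVec, ← mulVec_mulVec,
    mulVec_dotProduct_mulVec_self_of_transpose_mul_self_eq_one hU,
    ← mulVec_dotProduct_mulVec_self_of_transpose_mul_self_eq_one hVt v]
  simp only [dotProduct, mulVec_diagonal, Finset.mul_sum]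
  refine Finset.sum_le_sum fun i _ => ?_
  have hci : c i ^ 2 ≤ lam ^ 2 := sq_le_sq.mpr ((hc i).trans (le_abs_self lam))
  nlinarith [mul_self_nonneg (w i)]

end SingularValueDecomposition

theorem nuclearNorm_of_le {m n : ℕ} (h : n ≤ m) (X : Matrix (Fin m) (Fin n) ℝ) :
    nuclearNorm X = ∑ i, √((isHermitian_conjTranspose_mul_self X).eigenvalues i) :=
  if_pos h

theorem nuclearNorm_diagonal_sandwich {m n : ℕ} {U : Matrix (Fin m) (Fin n) ℝ}
    {V : Matrix (Fin n) (Fin n) ℝ} (hU : Uᵀ * U = 1) (hV : Vᵀ * V = 1) {d : Fin n → ℝ}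
    (hd : ∀ i, 0 ≤ d i) : nuclearNorm (U * diagonal d * Vᵀ) = ∑ i, d i := by
  have hnm : n ≤ m := by simpa using card_le_card_of_transpose_mul_self_eq_one hU
  have hcharpoly : ((U * diagonal d * Vᵀ)ᴴ * (U * diagonal d * Vᵀ)).charpoly =
      (diagonal (d * d)).charpoly := by
    rw [conjTranspose_eq_transpose_of_trivial, transpose_mul_of_diagonal_sandwich hU,
      charpoly_mul_mul_transpose hV]
  rw [nuclearNorm_of_le hnm, IsHermitian.sum_comp_eigenvalues_of_charpoly_eq _ hcharpoly]
  exact Finset.sum_congr rfl fun i _ => Real.sqrt_mul_self (hd i)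

theorem frobSq_eq_trace {m n : ℕ} (A : Matrix (Fin m) (Fin n) ℝ) :
    frobSq A = (Aᵀ * A).trace := by
  simp only [frobSq, trace, diag, mul_apply, transpose_apply, sq]
  exact Finset.sum_comm

theorem frobSq_nonneg {m n : ℕ} (A : Matrix (Fin m) (Fin n) ℝ) : 0 ≤ frobSq A := by
  unfold frobSq
  positivity

theorem frobSq_add {m n : ℕ} (A B : Matrix (Fin m) (Fin n) ℝ) :
    frobSq (A + B) = frobSq A + 2 * (Aᵀ * B).trace + frobSq B := by
  have hBA : (Bᵀ * A).trace = (Aᵀ * B).trace := by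
    rw [← trace_transpose, transpose_mul, transpose_transpose]
  simp only [frobSq_eq_trace, transpose_add, Matrix.add_mul, Matrix.mul_add, trace_add, hBA]
  ring

theorem half_frobSq_sub_add_le_of_subgradient {m n : ℕ} {N : Matrix (Fin m) (Fin n) ℝ → ℝ}
    {S Z : Matrix (Fin m) (Fin n) ℝ} (hS : ((Z - S)ᵀ * S).trace = N S)
    (hN : ∀ X, ((Z - S)ᵀ * X).trace ≤ N X) (X : Matrix (Fin m) (Fin n) ℝ) :
    1 / 2 * frobSq (S - Z) + N S ≤ 1 / 2 * frobSq (X - Z) + N X := by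
  have hcross : ((S - Z)ᵀ * (X - S)).trace = ((Z - S)ᵀ * S).trace - ((Z - S)ᵀ * X).trace := by
    rw [← neg_sub Z S, transpose_neg, Matrix.neg_mul, trace_neg, Matrix.mul_sub, trace_sub]
    ring
  have hexpand := frobSq_add (S - Z) (X - S)
  rw [show S - Z + (X - S) = X - Z by abel, hcross] at hexpand
  linarith [hN X, frobSq_nonneg (X - S)]

theorem soft_thresholding_minimizes_nuclear_norm_objective_general
    {m n : ℕ} (lam : ℝ) (hlam : 0 ≤ lam)
    (Z : Matrix (Fin m) (Fin n) ℝ)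
    (U : Matrix (Fin m) (Fin n) ℝ) (V : Matrix (Fin n) (Fin n) ℝ) (σ : Fin n → ℝ)
    (hU : Uᵀ * U = 1) (hV : Vᵀ * V = 1)
    (hσ : ∀ i, 0 ≤ σ i)
    (hZ : Z = U * Matrix.diagonal σ * Vᵀ) :
    ∀ X : Matrix (Fin m) (Fin n) ℝ,
      (1 / 2) * frobSq (U * Matrix.diagonal (fun i => max (σ i - lam) 0) * Vᵀ - Z) +
        lam * nuclearNorm (U * Matrix.diagonal (fun i => max (σ i - lam) 0) * Vᵀ) ≤
      (1 / 2) * frobSq (X - Z) + lam * nuclearNorm X := by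
  have hnm : n ≤ m := by simpa using card_le_card_of_transpose_mul_self_eq_one hU
  set d : Fin n → ℝ := fun i => max (σ i - lam) 0
  set c : Fin n → ℝ := fun i => min (σ i) lam
  have hZS : Z - U * diagonal d * Vᵀ = U * diagonal c * Vᵀ := by
    rw [hZ, ← Matrix.sub_mul, ← Matrix.mul_sub, diagonal_sub]
    congr 3
    ext i
    rcases le_total (σ i) lam with h | h <;> simp [c, d, h]
  refine half_frobSq_sub_add_le_of_subgradient (N := fun X => lam * nuclearNorm X) ?_ ?_
  · have hcd : ∀ i, c i * d i = lam * d i := fun i => by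
      rcases le_total (σ i) lam with h | h <;> simp [c, d, h]
    rw [hZS, trace_transpose_mul_of_diagonal_sandwich hU hV,
      nuclearNorm_diagonal_sandwich hU hV fun i => le_max_right _ _, Finset.mul_sum]
    exact Finset.sum_congr rfl fun i _ => hcd i
  · intro X
    have hc : ∀ i, |c i| ≤ lam := fun i => by
      rw [abs_of_nonneg (le_min (hσ i) hlam)]
      exact min_le_right _ _
    rw [hZS, nuclearNorm_of_le hnm]
    exact trace_transpose_mul_le _ hlam
      (mulVec_dotProduct_mulVec_self_le_of_diagonal_sandwich hU hV hc)

/-- Let `Z = U diag(σ) Vᵀ` be an SVD of the m×n matrix `Z`. For `λ ≥ 0`,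
the soft-thresholded matrix `S_{λ,ℓ₁}(Z) = U diag((σᵢ − λ)₊) Vᵀ` minimizes
`½‖X − Z‖_F² + λ‖X‖_*` over all m×n matrices `X`. -/
theorem soft_thresholding_minimizes_nuclear_norm_objective
    {m n : ℕ} (lam : ℝ) (hlam : 0 ≤ lam)
    (Z : Matrix (Fin m) (Fin n) ℝ)
    (U : Matrix (Fin m) (Fin n) ℝ) (V : Matrix (Fin n) (Fin n) ℝ) (σ : Fin n → ℝ)
    (hU : Uᵀ * U = 1) (hV : Vᵀ * V = 1)
    (hσ : ∀ i, 0 ≤ σ i) (hσord : ∀ i j : Fin n, i ≤ j → σ j ≤ σ i)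
    (hZ : Z = U * Matrix.diagonal σ * Vᵀ) :
    ∀ X : Matrix (Fin m) (Fin n) ℝ,
      (1 / 2) * frobSq (U * Matrix.diagonal (fun i => max (σ i - lam) 0) * Vᵀ - Z) +
        lam * nuclearNorm (U * Matrix.diagonal (fun i => max (σ i - lam) 0) * Vᵀ) ≤
      (1 / 2) * frobSq (X - Z) + lam * nuclearNorm X :=
  soft_thresholding_minimizes_nuclear_norm_objective_general lam hlam Z U V σ hU hV hσ hZ
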